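/- arXiv:1907.02150 — 3 statements merged into one kernel-verified Lean document; each statement's English description precedes it below -/
import Mathlib

section
/- For R-modules N' ⊆ N ⊆ M and u ∈ M, if a closure operation cl is functorial and semi-residual, then u ∈ N^{cl}_M if and only if u + N' ∈ (N/N')^{cl}_{M/N'}. -/
/-- A closure operation on (submodules of) `R`-modules: to each pair `N ⊆ M` it assigns
a submodule `N ⊆ N^cl_M ⊆ M`, idempotently and order-preservingly. -/
structure ClosureOperation (R : Type) [CommRing R] where
  cl : ∀ (M : Type) [AddCommGroup M] [Module R M], Submodule R M → Submodule R M
  le_cl : ∀ (M : Type) [AddCommGroup M] [Module R M] (N : Submodule R M), N ≤ cl M N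
  idem : ∀ (M : Type) [AddCommGroup M] [Module R M] (N : Submodule R M),
    cl M (cl M N) = cl M N
  mono : ∀ (M : Type) [AddCommGroup M] [Module R M] ⦃N N' : Submodule R M⦄,
    N ≤ N' → cl M N ≤ cl M N'

/-- `cl` is functorial: `f(N^cl_M) ⊆ f(N)^cl_W` for every `R`-linear `f : M → W`. -/
def ClosureOperation.Functorial {R : Type} [CommRing R] (C : ClosureOperation R) : Prop :=
  ∀ (M W : Type) [AddCommGroup M] [Module R M] [AddCommGroup W] [Module R W]
    (f : M →ₗ[R] W) (N : Submodule R M),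
    (C.cl M N).map f ≤ C.cl W (N.map f)

/-- `cl` is semi-residual: if `N^cl_M = N` then `0^cl_{M/N} = 0`. -/
def ClosureOperation.SemiResidual {R : Type} [CommRing R] (C : ClosureOperation R) : Prop :=
  ∀ (M : Type) [AddCommGroup M] [Module R M] (N : Submodule R M),
    C.cl M N = N → C.cl (M ⧸ N) ⊥ = ⊥

/-!
The forward implication is functoriality along `M → M/N'`. For the converse put `T = N^cl_M`,
which is closed, so `0^cl_{M/T} = 0` by semi-residuality. Pushing `u + N'` forward along
`M/N' → M/T` lands in the closure of the image of `N`, which is `0`; hence `u ∈ T`.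
-/

namespace ClosureOperation

variable {R : Type} [CommRing R] {C : ClosureOperation R}
  {M : Type} [AddCommGroup M] [Module R M]

theorem Functorial.map_mem_cl (hF : C.Functorial) {W : Type} [AddCommGroup W] [Module R W]
    (f : M →ₗ[R] W) {N : Submodule R M} {u : M} (hu : u ∈ C.cl M N) :
    f u ∈ C.cl W (N.map f) :=
  hF M W f N ⟨u, hu, rfl⟩

theorem SemiResidual.mem_of_mkQ_mem_cl_bot (hS : C.SemiResidual) {T : Submodule R M}
    (hT : C.cl M T = T) {u : M} (hu : T.mkQ u ∈ C.cl (M ⧸ T) ⊥) : u ∈ T := by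
  rwa [hS M T hT, Submodule.mem_bot, Submodule.mkQ_apply,
    Submodule.Quotient.mk_eq_zero] at hu

theorem mem_cl_of_mkQ_mem_cl_map (hF : C.Functorial) (hS : C.SemiResidual)
    {N' N : Submodule R M} (hN' : N' ≤ C.cl M N) {u : M}
    (hu : N'.mkQ u ∈ C.cl (M ⧸ N') (N.map N'.mkQ)) : u ∈ C.cl M N := by
  set T := C.cl M N
  have himage : N.map T.mkQ = ⊥ :=
    le_bot_iff.mp <| (Submodule.mkQ_map_self T).le.trans' (Submodule.map_mono (C.le_cl M N))
  have hpush := hF.map_mem_cl (Submodule.factor hN') hu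
  rw [← Submodule.map_comp, Submodule.factor_comp_mk, himage, Submodule.factor_mk] at hpush
  exact hS.mem_of_mkQ_mem_cl_bot (C.idem M N) hpush

end ClosureOperation

/-- For `N' ⊆ N ⊆ M` and `u ∈ M`, if `cl` is functorial and semi-residual,
then `u ∈ N^cl_M` iff `u + N' ∈ (N/N')^cl_{M/N'}`. -/
theorem stmt_3 (R : Type) [CommRing R] (C : ClosureOperation R)
    (hF : C.Functorial) (hS : C.SemiResidual)
    (M : Type) [AddCommGroup M] [Module R M]
    (N' N : Submodule R M) (hNN : N' ≤ N) (u : M) :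
    u ∈ C.cl M N ↔ N'.mkQ u ∈ C.cl (M ⧸ N') (N.map N'.mkQ) :=
  ⟨hF.map_mem_cl N'.mkQ,
    ClosureOperation.mem_cl_of_mkQ_mem_cl_map hF hS (hNN.trans (C.le_cl M N))⟩
end

section
/- If cl is a functorial closure operation and N = ⊕_{i∈I} N_i ⊆ M = ⊕_{i∈I} M_i with N_i ⊆ M_i, then N^{cl}_M = ⊕_{i∈I} (N_i)^{cl}_{M_i}. -/
open DirectSum

namespace ClosureOperation

variable {R : Type} [CommRing R] {C : ClosureOperation R}

theorem Functorial.map_cl_le (hF : C.Functorial) {M W : Type} [AddCommGroup M] [Module R M]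
    [AddCommGroup W] [Module R W] (f : M →ₗ[R] W) {N : Submodule R M} {L : Submodule R W}
    (h : N.map f ≤ L) : (C.cl M N).map f ≤ C.cl W L :=
  (hF M W f N).trans (C.mono W h)

end ClosureOperation

namespace DirectSum

variable {R : Type} [CommRing R] {ι : Type} [DecidableEq ι] {M : ι → Type}
  [∀ i, AddCommGroup (M i)] [∀ i, Module R (M i)]

theorem mem_iSup_map_lof_iff {N : ∀ i, Submodule R (M i)} {x : ⨁ i, M i} :
    x ∈ ⨆ i, (N i).map (lof R ι M i) ↔ ∀ i, x i ∈ N i := by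
  constructor
  · intro hx
    induction hx using Submodule.iSup_induction' with
    | mem j y hy =>
      obtain ⟨n, hn, rfl⟩ := hy
      intro i
      by_cases h : i = j
      · subst h; simpa [lof_apply] using hn
      · rw [lof_eq_of, of_eq_of_ne _ _ _ h]
        exact zero_mem _
    | zero => simp
    | add y z _ _ hy hz => intro i; simpa using add_mem (hy i) (hz i)
  · intro hx
    classical
    rw [← sum_support_of x]
    exact Submodule.sum_mem _ fun i _ => Submodule.mem_iSup_of_mem i ⟨x i, hx i, rfl⟩

end DirectSum

/-- If `cl` is functorial and `N = ⊕ᵢ Nᵢ ⊆ M = ⊕ᵢ Mᵢ` with `Nᵢ ⊆ Mᵢ`,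
then `N^cl_M = ⊕ᵢ (Nᵢ)^cl_{Mᵢ}`. -/
theorem stmt_4 (R : Type) [CommRing R] (C : ClosureOperation R) (hF : C.Functorial)
    (ι : Type) [DecidableEq ι] (M : ι → Type)
    [∀ i, AddCommGroup (M i)] [∀ i, Module R (M i)]
    (N : ∀ i, Submodule R (M i)) :
    C.cl (⨁ i, M i) (⨆ i, (N i).map (DirectSum.lof R ι M i)) =
      ⨆ i, (C.cl (M i) (N i)).map (DirectSum.lof R ι M i) := by
  refine le_antisymm (fun x hx => mem_iSup_map_lof_iff.2 fun i => ?_) ?_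
  · have hproj : (⨆ j, (N j).map (lof R ι M j)).map (component R ι M i) ≤ N i := by
      rintro _ ⟨y, hy, rfl⟩
      exact mem_iSup_map_lof_iff.1 hy i
    exact hF.map_cl_le _ hproj ⟨x, hx, rfl⟩
  · exact iSup_le fun i => hF.map_cl_le _ (le_iSup_of_le i le_rfl)
end

section
/- Let cl be a closure operation on R-modules that is functorial and semi-residual. Then the big test ideal τ_cl(R) = ⋂_{N ⊆ M} (N :_R N^{cl}_M), where the intersection is over all pairs of R-modules N ⊆ M, equals ⋂_M Ann_R(0^{cl}_M), the intersection of annihilators of 0^{cl}_M over all R-modules M. -/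
namespace ClosureOperation

variable {R : Type} [CommRing R] {C : ClosureOperation R}
variable {M : Type} [AddCommGroup M] [Module R M]

theorem Functorial.map_mkQ_cl_le_cl_bot (hF : C.Functorial) (N : Submodule R M) :
    (C.cl M N).map N.mkQ ≤ C.cl (M ⧸ N) ⊥ := by
  simpa only [Submodule.mkQ_map_self] using hF M (M ⧸ N) N.mkQ N

theorem Functorial.annihilator_cl_bot_quotient_le_colon (hF : C.Functorial)
    (N : Submodule R M) :
    (C.cl (M ⧸ N) ⊥).annihilator ≤ N.colon (C.cl M N) := by
  rw [← Submodule.annihilator_map_mkQ_eq_colon]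
  exact Submodule.annihilator_mono (hF.map_mkQ_cl_le_cl_bot N)

end ClosureOperation

theorem stmt_15_general (R : Type) [CommRing R] (C : ClosureOperation R)
    (hF : C.Functorial) (r : R) :
    (∀ (M : Type) [AddCommGroup M] [Module R M] (N : Submodule R M),
        r ∈ N.colon (C.cl M N)) ↔
      (∀ (M : Type) [AddCommGroup M] [Module R M],
        r ∈ (C.cl M (⊥ : Submodule R M)).annihilator) := by
  constructor
  · intro h M _ _
    simpa only [Submodule.bot_colon] using h M ⊥
  · intro h M _ _ N
    exact hF.annihilator_cl_bot_quotient_le_colon N (h (M ⧸ N))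

/-- For a functorial, semi-residual closure operation `cl`, the big test ideal
`τ_cl(R) = ⋂_{N ⊆ M} (N :_R N^cl_M)` equals `⋂_M Ann_R(0^cl_M)`. -/
theorem stmt_15 (R : Type) [CommRing R] (C : ClosureOperation R)
    (hF : C.Functorial) (hS : C.SemiResidual) (r : R) :
    (∀ (M : Type) [AddCommGroup M] [Module R M] (N : Submodule R M),
        r ∈ N.colon (C.cl M N)) ↔
      (∀ (M : Type) [AddCommGroup M] [Module R M],
        r ∈ (C.cl M (⊥ : Submodule R M)).annihilator) :=
  stmt_15_general R C hF r
end
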